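/- arXiv:1206.2221 — 9 statements merged into one kernel-verified Lean document; each statement's English description precedes it below -/
import Mathlib

section
/- Let c be a real number with |c| < √2 and let U_c : ℝ → ℂ be defined by U_c(x) = √((2−c²)/2)·tanh(√(2−c²)·x/2) + i·c/√2. Then U_c is smooth and satisfies the soliton ordinary differential equation −i·c·U_c′(x) + U_c″(x) + U_c(x)·(1 − |U_c(x)|²) = 0 for every x ∈ ℝ. -/
open Real

private lemma hasDerivAt_tanh' (u : ℝ) :
    HasDerivAt Real.tanh (1 - Real.tanh u ^ 2) u := by
  have h : HasDerivAt (fun x => Real.sinh x / Real.cosh x)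
      ((Real.cosh u * Real.cosh u - Real.sinh u * Real.sinh u) / Real.cosh u ^ 2) u :=
    (Real.hasDerivAt_sinh u).div (Real.hasDerivAt_cosh u) (Real.cosh_pos u).ne'
  have heq : (fun x => Real.sinh x / Real.cosh x) = Real.tanh := by
    funext x; rw [Real.tanh_eq_sinh_div_cosh]
  rw [heq] at h
  convert h using 1
  rw [Real.tanh_eq_sinh_div_cosh]
  have hc := (Real.cosh_pos u).ne'
  have := Real.cosh_sq_sub_sinh_sq u
  field_simp

private lemma contDiff_tanh' : ContDiff ℝ (⊤ : ℕ∞) Real.tanh := by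
  have : Real.tanh = fun x => Real.sinh x / Real.cosh x := by
    funext x; rw [Real.tanh_eq_sinh_div_cosh]
  rw [this]
  exact Real.contDiff_sinh.div Real.contDiff_cosh fun x => (Real.cosh_pos x).ne'

/-- The soliton profile `U_c` of the one-dimensional Gross-Pitaevskii equation is smooth
and satisfies the soliton ODE `-i c U_c' + U_c'' + U_c (1 - |U_c|²) = 0`. -/
theorem soliton_profile_smooth_and_solves_ode (c : ℝ) (hc : |c| < Real.sqrt 2)
    (U : ℝ → ℂ)
    (hU : ∀ x : ℝ, U x =
      (Real.sqrt ((2 - c ^ 2) / 2) * Real.tanh (Real.sqrt (2 - c ^ 2) * x / 2) : ℝ)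
        + Complex.I * (c / Real.sqrt 2 : ℝ)) :
    ContDiff ℝ (⊤ : ℕ∞) U ∧
      ∀ x : ℝ,
        -Complex.I * (c : ℂ) * deriv U x + deriv (deriv U) x
          + U x * (1 - (‖U x‖ : ℂ) ^ 2) = 0 := by
  have hs2 : (0:ℝ) < Real.sqrt 2 := Real.sqrt_pos.mpr (by norm_num)
  have hs2sq : Real.sqrt 2 ^ 2 = 2 := Real.sq_sqrt (by norm_num)
  have h2 : (0:ℝ) ≤ 2 - c ^ 2 := by nlinarith [sq_abs c, abs_nonneg c]
  set k : ℝ := Real.sqrt (2 - c ^ 2) with hk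
  set a : ℝ := Real.sqrt ((2 - c ^ 2) / 2) with ha
  set b : ℝ := c / Real.sqrt 2 with hbdef
  have hk2 : k ^ 2 = 2 - c ^ 2 := Real.sq_sqrt h2
  have haks : a = k / Real.sqrt 2 := by rw [ha, hk, Real.sqrt_div h2]
  have ha2 : a ^ 2 = k ^ 2 / 2 := by rw [haks]; field_simp; rw [hs2sq]
  have hb2 : b ^ 2 = c ^ 2 / 2 := by rw [hbdef, div_pow, hs2sq]
  have hab : a * c = b * k := by rw [haks, hbdef]; ring
  -- the function U as ofReal ∘ f + const
  have hUeq : U = fun x => ((a * Real.tanh (k * x / 2) : ℝ) : ℂ) + Complex.I * (b : ℝ) := by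
    funext x; rw [hU x]
  -- first derivative
  have hd1 : ∀ x : ℝ, HasDerivAt U
      (((a * (k / 2) * (1 - Real.tanh (k * x / 2) ^ 2) : ℝ) : ℂ)) x := by
    intro x
    rw [hUeq]
    have h1 : HasDerivAt (fun x : ℝ => k * x / 2) (k / 2) x := by
      simpa using ((hasDerivAt_id x).const_mul k).div_const 2
    have h2' : HasDerivAt (fun x : ℝ => Real.tanh (k * x / 2))
        ((1 - Real.tanh (k * x / 2) ^ 2) * (k / 2)) x :=
      HasDerivAt.comp (h₂ := Real.tanh) x (hasDerivAt_tanh' (k * x / 2)) h1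
    have h3 : HasDerivAt (fun x : ℝ => a * Real.tanh (k * x / 2))
        (a * (k / 2) * (1 - Real.tanh (k * x / 2) ^ 2)) x := by
      have := h2'.const_mul a
      exact this.congr_deriv (by ring)
    exact (h3.ofReal_comp).add_const _
  have hderiv1 : deriv U = fun x =>
      (((a * (k / 2) * (1 - Real.tanh (k * x / 2) ^ 2) : ℝ) : ℂ)) := by
    funext x; exact (hd1 x).deriv
  -- second derivative
  have hd2 : ∀ x : ℝ, HasDerivAt (deriv U)
      (((a * (k / 2) * (-2 * Real.tanh (k * x / 2) * ((1 - Real.tanh (k * x / 2) ^ 2) * (k / 2))) : ℝ) : ℂ)) x := by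
    intro x
    rw [hderiv1]
    have h1 : HasDerivAt (fun x : ℝ => k * x / 2) (k / 2) x := by
      simpa using ((hasDerivAt_id x).const_mul k).div_const 2
    have h2' : HasDerivAt (fun x : ℝ => Real.tanh (k * x / 2))
        ((1 - Real.tanh (k * x / 2) ^ 2) * (k / 2)) x :=
      HasDerivAt.comp (h₂ := Real.tanh) x (hasDerivAt_tanh' (k * x / 2)) h1
    have h3 : HasDerivAt (fun x : ℝ => Real.tanh (k * x / 2) ^ 2)
        (2 * Real.tanh (k * x / 2) * ((1 - Real.tanh (k * x / 2) ^ 2) * (k / 2))) x := by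
      have := h2'.pow 2
      exact this.congr_deriv (by ring)
    have h4 : HasDerivAt (fun x : ℝ => a * (k / 2) * (1 - Real.tanh (k * x / 2) ^ 2))
        (a * (k / 2) * (-2 * Real.tanh (k * x / 2) * ((1 - Real.tanh (k * x / 2) ^ 2) * (k / 2)))) x := by
      have := ((h3.const_sub 1).const_mul (a * (k / 2)))
      exact this.congr_deriv (by ring)
    exact h4.ofReal_comp
  constructor
  · rw [hUeq]
    exact (Complex.ofRealCLM.contDiff.comp
      (contDiff_const.mul (contDiff_tanh'.comp
        ((contDiff_const.mul contDiff_id).div_const 2)))).add contDiff_const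
  · intro x
    set t : ℝ := Real.tanh (k * x / 2) with ht
    have e1 : deriv U x = ((a * (k / 2) * (1 - t ^ 2) : ℝ) : ℂ) := by rw [hderiv1]
    have e2 : deriv (deriv U) x
        = ((a * (k / 2) * (-2 * t * ((1 - t ^ 2) * (k / 2))) : ℝ) : ℂ) := (hd2 x).deriv
    have e3 : ((‖U x‖ : ℂ) ^ 2) = ((a * t) ^ 2 + b ^ 2 : ℝ) := by
      rw [hU x]
      rw [show Complex.I * (b:ℂ) = (b:ℂ) * Complex.I by ring]
      norm_cast
      rw [Complex.sq_norm, Complex.normSq_add_mul_I]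
    rw [e1, e2, e3, hU x, ← ht]
    push_cast
    linear_combination
      ((-(((a:ℂ) * t + Complex.I * b)) / 2) * (by exact_mod_cast congrArg (Complex.ofReal) hk2 : ((k:ℝ):ℂ) ^ 2 = 2 - (c:ℂ) ^ 2)) +
      ((-(((a:ℂ) * t + Complex.I * b)) * (t:ℂ) ^ 2) * (by exact_mod_cast congrArg (Complex.ofReal) ha2 : ((a:ℝ):ℂ) ^ 2 = (k:ℂ) ^ 2 / 2)) +
      ((-(((a:ℂ) * t + Complex.I * b))) * (by exact_mod_cast congrArg (Complex.ofReal) hb2 : ((b:ℝ):ℂ) ^ 2 = (c:ℂ) ^ 2 / 2)) +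
      ((-Complex.I * ((k:ℂ) / 2) * (1 - (t:ℂ) ^ 2)) * (by exact_mod_cast congrArg (Complex.ofReal) hab : ((a:ℝ):ℂ) * c = (b:ℂ) * k))
end

section
/- Let c be a real number with 0 < |c| < √2. Then the scalar momentum of the soliton, P(Q_c) := (1/2)·∫_ℝ η_c(x)·v_c(x) dx, equals arctan(c/√(2−c²)) + c·√(2−c²)/2 − sign(c)·π/2, where sign(c) = 1 if c > 0 and sign(c) = −1 if c < 0. -/
/-!
Put `K = √(2 - c²)` and `t = tanh (K x / 2)`. Then `η = K² (1 - t²) / 2` and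
`1 - η = (c² + K² t²) / 2`, so `η v = -c K⁴ (1 - t²)² / (4 (c² + K² t²))`, which is the
`x`-derivative of `(c K / 2) t - arctan (K t / c)`. This derivative has the sign of `-c`, hence
is integrable, and its integral is the jump of the antiderivative between `t = -1` and `t = 1`,
namely `c K - 2 arctan (K / c)`; finally `arctan (K / c) + arctan (c / K) = sign c · π / 2`.
-/
open MeasureTheory Filter Topology Real

namespace Real

theorem inv_cosh_sq_eq_one_sub_tanh_sq (x : ℝ) : (cosh x ^ 2)⁻¹ = 1 - tanh x ^ 2 := by
  have h := cosh_sq_sub_sinh_sq x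
  have : cosh x ≠ 0 := (cosh_pos x).ne'
  rw [tanh_eq_sinh_div_cosh]
  field_simp
  linarith

theorem hasDerivAt_tanh (x : ℝ) : HasDerivAt tanh (1 - tanh x ^ 2) x := by
  have h := (hasDerivAt_sinh x).div (hasDerivAt_cosh x) (cosh_pos x).ne'
  rw [← sq, ← sq, cosh_sq_sub_sinh_sq x, one_div, inv_cosh_sq_eq_one_sub_tanh_sq] at h
  exact h.congr_of_eventuallyEq (.of_forall fun y => tanh_eq_sinh_div_cosh y)

theorem tanh_eq_one_sub_two_div (x : ℝ) : tanh x = 1 - 2 / (exp (2 * x) + 1) := by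
  have hx : exp (2 * x) = exp x * exp x := by rw [← exp_add, two_mul]
  rw [tanh_eq, exp_neg, hx]
  field_simp
  ring

theorem tendsto_tanh_atTop : Tendsto tanh atTop (𝓝 1) := by
  have h : Tendsto (fun x => exp (2 * x) + 1) atTop atTop :=
    tendsto_atTop_add_const_right _ 1
      (tendsto_exp_atTop.comp (tendsto_id.const_mul_atTop two_pos))
  simpa [funext tanh_eq_one_sub_two_div] using
    tendsto_const_nhds.sub (tendsto_const_nhds.div_atTop h)

theorem tendsto_tanh_atBot : Tendsto tanh atBot (𝓝 (-1)) := by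
  simpa [Function.comp_def] using (tendsto_tanh_atTop.comp tendsto_neg_atBot_atTop).neg

theorem arctan_add_arctan_inv {x : ℝ} (hx : x ≠ 0) :
    arctan x + arctan x⁻¹ = (if 0 < x then 1 else -1) * π / 2 := by
  rcases hx.lt_or_gt with hneg | hpos
  · rw [arctan_inv_of_neg hneg, if_neg hneg.not_gt]
    ring
  · rw [arctan_inv_of_pos hpos, if_pos hpos]
    ring

end Real

theorem integrable_deriv_of_nonpos {f f' : ℝ → ℝ} {m n : ℝ}
    (hderiv : ∀ x, HasDerivAt f (f' x) x) (hf' : ∀ x, f' x ≤ 0)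
    (hbot : Tendsto f atBot (𝓝 m)) (htop : Tendsto f atTop (𝓝 n)) : Integrable f' := by
  have hIoi : IntegrableOn f' (Set.Ioi 0) :=
    integrableOn_Ioi_deriv_of_nonpos' (fun x _ => hderiv x) (fun x _ => hf' x) htop
  have hIio : IntegrableOn f' (Set.Iio 0) := by
    have hrefl : IntegrableOn (fun x => f' (-x)) (Set.Ioi (-0)) := by
      refine integrableOn_Ioi_deriv_of_nonpos' (g := fun x => -f (-x))
        (fun x _ => ((hderiv (-x)).comp x (hasDerivAt_neg' x)).neg.congr_deriv (by ring))
        (fun x _ => hf' (-x)) (hbot.comp tendsto_neg_atTop_atBot).neg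
    simpa using hrefl.comp_neg_Iio
  rw [← integrableOn_univ, ← Set.Iic_union_Ioi (a := (0 : ℝ))]
  exact ((integrableOn_Iic_iff_integrableOn_Iio).mpr hIio).union hIoi

section Soliton

variable {c K : ℝ}

noncomputable def momentumPotential (c K t : ℝ) : ℝ := c * K / 2 * t - arctan (K * t / c)

noncomputable def momentumDensity (c K t : ℝ) : ℝ :=
  -(c * K ^ 4 * (1 - t ^ 2) ^ 2) / (4 * (c ^ 2 + K ^ 2 * t ^ 2))

theorem continuous_momentumPotential (c K : ℝ) : Continuous (momentumPotential c K) := by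
  unfold momentumPotential
  fun_prop

theorem hasDerivAt_momentumPotential (hc : c ≠ 0) (t : ℝ) :
    HasDerivAt (momentumPotential c K) (c * K / 2 - K * c / (c ^ 2 + K ^ 2 * t ^ 2)) t := by
  have hlin : HasDerivAt (fun t => K * t / c) (K / c) t := by
    simpa using ((hasDerivAt_id t).const_mul K).div_const c
  refine (((hasDerivAt_id t).const_mul (c * K / 2)).sub hlin.arctan).congr_deriv ?_
  have : c ^ 2 + K ^ 2 * t ^ 2 ≠ 0 := by positivity
  field_simp

theorem hasDerivAt_momentumPotential_comp_tanh (hc : c ≠ 0) (hK : K ^ 2 = 2 - c ^ 2) (x : ℝ) :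
    HasDerivAt (fun x => momentumPotential c K (tanh (K * x / 2)))
      (momentumDensity c K (tanh (K * x / 2))) x := by
  have hlin : HasDerivAt (fun x => K * x / 2) (K / 2) x := by
    simpa using ((hasDerivAt_id x).const_mul K).div_const 2
  refine ((hasDerivAt_momentumPotential hc _).comp x
    ((hasDerivAt_tanh _).comp x hlin)).congr_deriv ?_
  rw [Function.comp_apply]
  set t := tanh (K * x / 2)
  have : c ^ 2 + K ^ 2 * t ^ 2 ≠ 0 := by positivity
  unfold momentumDensity
  field_simp
  linear_combination 4 * K ^ 2 * (1 - t ^ 2) * hK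

theorem momentumDensity_div_nonpos (hc : c ≠ 0) (t : ℝ) : momentumDensity c K t / c ≤ 0 := by
  have : 0 < c ^ 2 + K ^ 2 * t ^ 2 := by positivity
  rw [momentumDensity, neg_div, neg_div, neg_nonpos, mul_assoc, mul_div_assoc,
    mul_div_cancel_left₀ _ hc]
  positivity

theorem integral_momentumDensity_comp_tanh (hc : c ≠ 0) (hK0 : 0 < K) (hK : K ^ 2 = 2 - c ^ 2) :
    ∫ x, momentumDensity c K (tanh (K * x / 2)) = c * K - 2 * arctan (K / c) := by
  have htop := ((continuous_momentumPotential c K).tendsto 1).comp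
    (tendsto_tanh_atTop.comp ((tendsto_id.const_mul_atTop hK0).atTop_div_const two_pos))
  have hbot := ((continuous_momentumPotential c K).tendsto (-1)).comp
    (tendsto_tanh_atBot.comp ((tendsto_id.const_mul_atBot hK0).atBot_div_const two_pos))
  have hderiv := hasDerivAt_momentumPotential_comp_tanh hc hK
  have hint : Integrable fun x => momentumDensity c K (tanh (K * x / 2)) := by
    have := integrable_deriv_of_nonpos (fun x => (hderiv x).div_const c)
      (fun x => momentumDensity_div_nonpos hc _) (hbot.div_const c) (htop.div_const c)
    simpa [div_mul_cancel₀ _ hc] using this.mul_const c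
  rw [integral_of_hasDerivAt_of_tendsto hderiv hint hbot htop]
  simp only [momentumPotential, mul_one, mul_neg_one, neg_div, arctan_neg]
  ring

theorem eta_mul_v_eq_momentumDensity {η v : ℝ → ℝ} (hc : c ≠ 0) (hK : K ^ 2 = 2 - c ^ 2)
    (hη : ∀ x, η x = K ^ 2 / (2 * cosh (K * x / 2) ^ 2))
    (hv : ∀ x, v x = -c * η x / (2 * (1 - η x))) (x : ℝ) :
    η x * v x = momentumDensity c K (tanh (K * x / 2)) := by
  set t := tanh (K * x / 2)
  have hηt : η x = K ^ 2 / 2 * (1 - t ^ 2) := by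
    rw [hη, ← inv_cosh_sq_eq_one_sub_tanh_sq]
    ring
  have hsub : 1 - η x = (c ^ 2 + K ^ 2 * t ^ 2) / 2 := by
    rw [hηt]
    linear_combination -hK / 2
  have : c ^ 2 + K ^ 2 * t ^ 2 ≠ 0 := by positivity
  rw [hv, hsub, hηt, momentumDensity]
  field_simp
  ring

end Soliton

/-- Explicit value of the momentum of the soliton `Q_c`:
`P(Q_c) = arctan(c/√(2-c²)) + c √(2-c²)/2 - sign(c) π/2`. -/
theorem momentum_of_soliton (c : ℝ) (hc0 : c ≠ 0) (hc : |c| < Real.sqrt 2)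
    (η v : ℝ → ℝ)
    (hη : ∀ x : ℝ, η x =
      (2 - c ^ 2) / (2 * (Real.cosh (Real.sqrt (2 - c ^ 2) * x / 2)) ^ 2))
    (hv : ∀ x : ℝ, v x = -c * η x / (2 * (1 - η x))) :
    (1 / 2) * (∫ x : ℝ, η x * v x) =
      Real.arctan (c / Real.sqrt (2 - c ^ 2)) + c * Real.sqrt (2 - c ^ 2) / 2
        - (if 0 < c then (1 : ℝ) else -1) * Real.pi / 2 := by
  have hc2 : c ^ 2 < 2 := Real.sq_lt.mpr (abs_lt.mp hc)
  set K := Real.sqrt (2 - c ^ 2)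
  have hK0 : 0 < K := Real.sqrt_pos.mpr (by linarith)
  have hK : K ^ 2 = 2 - c ^ 2 := Real.sq_sqrt (by linarith)
  have hηK : ∀ x, η x = K ^ 2 / (2 * Real.cosh (K * x / 2) ^ 2) := fun x => by rw [hη, hK]
  have hsum := arctan_add_arctan_inv (div_ne_zero hK0.ne' hc0)
  simp only [inv_div, div_pos_iff_of_pos_left hK0] at hsum
  rw [funext (eta_mul_v_eq_momentumDensity hc0 hK hηK hv),
    integral_momentumDensity_comp_tanh hc0 hK0 hK]
  linear_combination -hsum
end

section
/- Let c be a real number with 0 < |c| < √2. Then the Ginzburg–Landau energy of the soliton, E(Q_c) := (1/8)·∫_ℝ (η_c′(x))²/(1−η_c(x)) dx + (1/2)·∫_ℝ (1−η_c(x))·v_c(x)² dx + (1/4)·∫_ℝ η_c(x)² dx, equals (2−c²)^(3/2)/3. -/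
/-!
With `a = √(2 - c²)` the profile is `η = (a²/2) sech²(a x / 2)`, and it satisfies the first
integral `(η')² = η² (a² - 2η)` of the soliton equation. Substituting it, together with
`(1 - η) v² = c² η² / (4 (1 - η))`, gives `(η')² / (1 - η) = 2 η² - 4 (1 - η) v²` wherever
`η ≠ 1`, i.e. off at most one point, so the energy collapses to `(1/2) ∫ η²`. Finally
`(a³/2) (tanh - tanh³/3)(a x / 2)` is a primitive of `η²` with limits `± a³/3`, hence
`∫ η² = 2 a³ / 3`.
-/

open MeasureTheory Filter Topology Real

namespace Real

theorem one_sub_tanh_sq (x : ℝ) : 1 - tanh x ^ 2 = (cosh x ^ 2)⁻¹ := by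
  have := cosh_pos x
  rw [tanh_eq_sinh_div_cosh]
  field_simp
  linear_combination cosh_sq_sub_sinh_sq x

end Real

theorem integrable_deriv_of_nonneg_of_tendsto {f f' : ℝ → ℝ} {m n : ℝ}
    (hderiv : ∀ x, HasDerivAt f (f' x) x) (hf' : ∀ x, 0 ≤ f' x)
    (hbot : Tendsto f atBot (𝓝 m)) (htop : Tendsto f atTop (𝓝 n)) : Integrable f' := by
  have hint : ∀ a b, IntervalIntegrable f' volume a b := fun a b =>
    intervalIntegral.intervalIntegrable_deriv_of_nonneg
      (continuous_iff_continuousAt.2 fun x => (hderiv x).continuousAt).continuousOn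
      (fun x _ => hderiv x) (fun x _ => hf' x)
  refine integrable_of_intervalIntegral_norm_tendsto (n - m) (fun i => (hint (-i) i).1)
    tendsto_neg_atTop_atBot tendsto_id ?_
  simp_rw [norm_of_nonneg (hf' _),
    intervalIntegral.integral_eq_sub_of_hasDerivAt (fun x _ => hderiv x) (hint _ _)]
  exact htop.sub (hbot.comp tendsto_neg_atTop_atBot)

noncomputable def solitonProfile (a x : ℝ) : ℝ := a ^ 2 / (2 * cosh (a * x / 2) ^ 2)

section solitonProfile

variable (a : ℝ)

theorem solitonProfile_eq_tanh (x : ℝ) :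
    solitonProfile a x = a ^ 2 / 2 * (1 - tanh (a * x / 2) ^ 2) := by
  rw [solitonProfile, one_sub_tanh_sq]
  ring

theorem solitonProfile_le (x : ℝ) : solitonProfile a x ≤ a ^ 2 / 2 := by
  rw [solitonProfile_eq_tanh]
  nlinarith [sq_nonneg a, sq_nonneg (tanh (a * x / 2))]

theorem hasDerivAt_solitonProfile (x : ℝ) :
    HasDerivAt (solitonProfile a) (-a * tanh (a * x / 2) * solitonProfile a x) x := by
  rw [funext (solitonProfile_eq_tanh a)]
  have hlin : HasDerivAt (fun x => a * x / 2) (a / 2) x := by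
    simpa using ((hasDerivAt_id x).const_mul a).div_const 2
  refine ((((hasDerivAt_tanh _).comp x hlin).pow 2).const_sub 1
    |>.const_mul (a ^ 2 / 2)).congr_deriv ?_
  norm_num [Function.comp_apply]
  ring

@[fun_prop]
theorem continuous_solitonProfile : Continuous (solitonProfile a) :=
  continuous_iff_continuousAt.2 fun x => (hasDerivAt_solitonProfile a x).continuousAt

theorem deriv_solitonProfile_sq (x : ℝ) :
    deriv (solitonProfile a) x ^ 2 =
      solitonProfile a x ^ 2 * (a ^ 2 - 2 * solitonProfile a x) := by
  rw [(hasDerivAt_solitonProfile a x).deriv]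
  nth_rewrite 3 [solitonProfile_eq_tanh]
  ring

variable {a}

theorem solitonProfile_lt {x : ℝ} (ha : a ≠ 0) (hx : x ≠ 0) : solitonProfile a x < a ^ 2 / 2 := by
  have hcosh : 1 < cosh (a * x / 2) ^ 2 :=
    one_lt_pow₀ (one_lt_cosh.2 (by positivity)) two_ne_zero
  rw [solitonProfile, div_lt_div_iff_of_pos_left (by positivity) (by positivity) two_pos]
  linarith

theorem exists_primitive_solitonProfile_sq (ha : 0 < a) :
    ∃ F : ℝ → ℝ, (∀ x, HasDerivAt F (solitonProfile a x ^ 2) x) ∧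
      Tendsto F atBot (𝓝 (-(a ^ 3 / 3))) ∧ Tendsto F atTop (𝓝 (a ^ 3 / 3)) := by
  set P : ℝ → ℝ := fun t => a ^ 3 / 2 * (t - t ^ 3 / 3)
  have hP : Continuous P := by fun_prop
  have hlin_bot : Tendsto (fun x => a * x / 2) atBot atBot :=
    (tendsto_id.const_mul_atBot ha).atBot_div_const two_pos
  have hlin_top : Tendsto (fun x => a * x / 2) atTop atTop :=
    (tendsto_id.const_mul_atTop ha).atTop_div_const two_pos
  refine ⟨fun x => P (tanh (a * x / 2)), fun x => ?_, ?_, ?_⟩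
  · have hlin : HasDerivAt (fun x => a * x / 2) (a / 2) x := by
      simpa using ((hasDerivAt_id x).const_mul a).div_const 2
    have hP' : HasDerivAt P (a ^ 3 / 2 * (1 - tanh (a * x / 2) ^ 2)) (tanh (a * x / 2)) :=
      (((hasDerivAt_id _).sub ((hasDerivAt_pow 3 _).div_const 3)).const_mul
        (a ^ 3 / 2)).congr_deriv (by ring)
    refine (hP'.comp x ((hasDerivAt_tanh _).comp x hlin)).congr_deriv ?_
    rw [solitonProfile_eq_tanh]
    ring
  · have h := (hP.tendsto (-1)).comp (tendsto_tanh_atBot.comp hlin_bot)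
    rwa [show P (-1) = -(a ^ 3 / 3) by simp only [P]; ring] at h
  · have h := (hP.tendsto 1).comp (tendsto_tanh_atTop.comp hlin_top)
    rwa [show P 1 = a ^ 3 / 3 by simp only [P]; ring] at h

theorem integrable_solitonProfile_sq (ha : 0 < a) :
    Integrable fun x => solitonProfile a x ^ 2 :=
  let ⟨_, hF, hbot, htop⟩ := exists_primitive_solitonProfile_sq ha
  integrable_deriv_of_nonneg_of_tendsto hF (fun _ => sq_nonneg _) hbot htop

theorem integral_solitonProfile_sq (ha : 0 < a) :
    ∫ x, solitonProfile a x ^ 2 = 2 * a ^ 3 / 3 := by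
  obtain ⟨_, hF, hbot, htop⟩ := exists_primitive_solitonProfile_sq ha
  rw [integral_of_hasDerivAt_of_tendsto hF (integrable_solitonProfile_sq ha) hbot htop]
  ring

end solitonProfile

theorem kinetic_term_eq_of_first_integral {a c η η' : ℝ} (ha : a ^ 2 = 2 - c ^ 2) (hη : η ≠ 1)
    (hη' : η' ^ 2 = η ^ 2 * (a ^ 2 - 2 * η)) :
    η' ^ 2 / (1 - η) = 2 * η ^ 2 - 4 * ((1 - η) * (-c * η / (2 * (1 - η))) ^ 2) := by
  have : 1 - η ≠ 0 := sub_ne_zero.2 hη.symm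
  rw [hη', ha]
  field_simp
  ring

theorem abs_one_sub_mul_sq_le {c η : ℝ} (hc : c ^ 2 ≤ 2 * (1 - η)) :
    |(1 - η) * (-c * η / (2 * (1 - η))) ^ 2| ≤ η ^ 2 := by
  rcases (show 0 ≤ 1 - η by nlinarith [sq_nonneg c]).eq_or_lt with h | h
  · simp only [← h, zero_mul, abs_zero]
    positivity
  · rw [abs_of_nonneg (by positivity), div_pow, mul_pow, mul_pow]
    field_simp
    nlinarith [sq_nonneg η, sq_nonneg c]

theorem energy_of_soliton_general (c : ℝ) (hc : |c| < Real.sqrt 2)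
    (η v : ℝ → ℝ)
    (hη : ∀ x : ℝ, η x =
      (2 - c ^ 2) / (2 * (Real.cosh (Real.sqrt (2 - c ^ 2) * x / 2)) ^ 2))
    (hv : ∀ x : ℝ, v x = -c * η x / (2 * (1 - η x))) :
    (1 / 8) * (∫ x : ℝ, (deriv η x) ^ 2 / (1 - η x))
      + (1 / 2) * (∫ x : ℝ, (1 - η x) * (v x) ^ 2)
      + (1 / 4) * (∫ x : ℝ, (η x) ^ 2)
      = (2 - c ^ 2) ^ ((3 : ℝ) / 2) / 3 := by
  have hc2 : c ^ 2 < 2 := by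
    simpa using sq_lt_sq' (neg_lt_of_abs_lt hc) (lt_of_abs_lt hc)
  rw [Real.rpow_div_two_eq_sqrt _ (by linarith), Real.rpow_ofNat]
  set a := Real.sqrt (2 - c ^ 2)
  have ha : 0 < a := Real.sqrt_pos.2 (by linarith)
  have ha2 : a ^ 2 = 2 - c ^ 2 := Real.sq_sqrt (by linarith)
  obtain rfl : η = solitonProfile a := funext fun x => by rw [hη, ← ha2, solitonProfile]
  have hint_η := integrable_solitonProfile_sq ha
  have hv_meas : AEStronglyMeasurable v := by
    rw [funext hv]
    exact (by fun_prop : Measurable fun x =>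
      -c * solitonProfile a x / (2 * (1 - solitonProfile a x))).aestronglyMeasurable
  have hint_v : Integrable fun x => (1 - solitonProfile a x) * v x ^ 2 := by
    refine hint_η.mono' (by fun_prop) (ae_of_all _ fun x => ?_)
    rw [hv, Real.norm_eq_abs]
    exact abs_one_sub_mul_sq_le (by linarith [solitonProfile_le a x])
  have hdensity : ∀ᵐ x, deriv (solitonProfile a) x ^ 2 / (1 - solitonProfile a x) =
      2 * solitonProfile a x ^ 2 - 4 * ((1 - solitonProfile a x) * v x ^ 2) := by
    filter_upwards [Measure.ae_ne volume 0] with x hx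
    rw [hv]
    refine kinetic_term_eq_of_first_integral ha2 (ne_of_lt ?_) (deriv_solitonProfile_sq a x)
    linarith [solitonProfile_lt ha.ne' hx, sq_nonneg c]
  rw [integral_congr_ae hdensity, integral_sub (hint_η.const_mul 2) (hint_v.const_mul 4),
    integral_const_mul, integral_const_mul, integral_solitonProfile_sq ha]
  ring

/-- Explicit value of the Ginzburg-Landau energy of the soliton `Q_c`:
`E(Q_c) = (2-c²)^(3/2)/3`. -/
theorem energy_of_soliton (c : ℝ) (hc0 : c ≠ 0) (hc : |c| < Real.sqrt 2)
    (η v : ℝ → ℝ)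
    (hη : ∀ x : ℝ, η x =
      (2 - c ^ 2) / (2 * (Real.cosh (Real.sqrt (2 - c ^ 2) * x / 2)) ^ 2))
    (hv : ∀ x : ℝ, v x = -c * η x / (2 * (1 - η x))) :
    (1 / 8) * (∫ x : ℝ, (deriv η x) ^ 2 / (1 - η x))
      + (1 / 2) * (∫ x : ℝ, (1 - η x) * (v x) ^ 2)
      + (1 / 4) * (∫ x : ℝ, (η x) ^ 2)
      = (2 - c ^ 2) ^ ((3 : ℝ) / 2) / 3 :=
  energy_of_soliton_general c hc η v hη hv
end

section
/- Let c₀ be a real number with 0 < |c₀| < √2. Then the function c ↦ P(Q_c) := (1/2)·∫_ℝ η_c(x)·v_c(x) dx, defined for c in a neighborhood of c₀ contained in (−√2,√2)∖{0}, is differentiable at c₀ with derivative equal to √(2−c₀²). -/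
/-!
With `k = √(2 - c²)` and `t = tanh (k x / 2)` one has `η_c = (k² / 2) (1 - t²)` and
`2 (1 - η_c) = c² + k² t²`, so `η_c v_c` is the `x`-derivative of `(c k / 2) t - arctan (k t / c)`.
As `t` runs from `-1` to `1`, this gives `P(Q_c) = c k / 2 - arctan (k / c)`, whose derivative in
`c` is `k` because `c² + k² = 2`.
-/

open MeasureTheory Real Filter Topology Set

theorem integrable_of_hasDerivAt_of_nonneg_of_tendsto {g g' : ℝ → ℝ} {m n : ℝ}
    (hderiv : ∀ x, HasDerivAt g (g' x) x) (hg' : ∀ x, 0 ≤ g' x)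
    (hbot : Tendsto g atBot (𝓝 m)) (htop : Tendsto g atTop (𝓝 n)) : Integrable g' := by
  have hright : IntegrableOn g' (Ioi 0) :=
    integrableOn_Ioi_deriv_of_nonneg' (fun x _ ↦ hderiv x) (fun x _ ↦ hg' x) htop
  -- the left half is the right half of the derivative of the reflection `x ↦ -g (-x)`
  have hleft : IntegrableOn (fun x ↦ g' (-x)) (Ioi 0) := by
    refine integrableOn_Ioi_deriv_of_nonneg' (g := fun x ↦ -g (-x)) (fun x _ ↦ ?_)
      (fun x _ ↦ hg' (-x)) (hbot.comp tendsto_neg_atTop_atBot).neg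
    have h := ((hderiv (-x)).comp x (hasDerivAt_neg x)).neg
    rwa [mul_neg_one, neg_neg] at h
  rw [← integrableOn_univ, ← Iio_union_Ici (a := (0 : ℝ)), integrableOn_union,
    integrableOn_Ici_iff_integrableOn_Ioi]
  refine ⟨?_, hright⟩
  rw [← (Measure.measurePreserving_neg (volume : Measure ℝ)).integrableOn_comp_preimage
      (Homeomorph.neg ℝ).measurableEmbedding]
  simpa [Function.comp_def] using hleft

theorem Real.hasDerivAt_tanh_s5 (x : ℝ) : HasDerivAt tanh (1 - tanh x ^ 2) x := by
  have h := (hasDerivAt_sinh x).div (hasDerivAt_cosh x) (cosh_pos x).ne'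
  rw [show tanh = sinh / cosh from funext tanh_eq_sinh_div_cosh]
  refine h.congr_deriv ?_
  rw [Pi.div_apply, div_pow, one_sub_div (pow_ne_zero 2 (cosh_pos x).ne')]
  ring

theorem Real.tendsto_tanh_atTop_s5 : Tendsto tanh atTop (𝓝 1) := by
  have h : ∀ x, tanh x = 1 - 2 / (exp (2 * x) + 1) := by
    intro x
    rw [tanh_eq, show 2 * x = x + x by ring, exp_add, exp_neg]
    field_simp
    ring
  have hden : Tendsto (fun x ↦ exp (2 * x) + 1) atTop atTop :=
    tendsto_atTop_add_const_right _ 1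
      (tendsto_exp_atTop.comp (tendsto_id.const_mul_atTop two_pos))
  simpa using (tendsto_const_nhds (x := (1 : ℝ)) |>.sub (hden.const_div_atTop 2)).congr
    fun x ↦ (h x).symm

theorem Real.tendsto_tanh_atBot_s5 : Tendsto tanh atBot (𝓝 (-1)) := by
  simpa [Function.comp_def] using (tendsto_tanh_atTop_s5.comp tendsto_neg_atBot_atTop).neg

noncomputable def solitonEta (c x : ℝ) : ℝ :=
  (2 - c ^ 2) / (2 * cosh (√(2 - c ^ 2) * x / 2) ^ 2)

noncomputable def solitonV (c x : ℝ) : ℝ :=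
  -c * solitonEta c x / (2 * (1 - solitonEta c x))

/-- An antiderivative of `η_c v_c` in the variable `s = tanh (√(2 - c²) x / 2)`. -/
noncomputable def momentumPrimitive (c s : ℝ) : ℝ :=
  c * √(2 - c ^ 2) / 2 * s - arctan (√(2 - c ^ 2) / c * s)

theorem solitonEta_eq_tanh (c x : ℝ) :
    solitonEta c x = (2 - c ^ 2) / 2 * (1 - tanh (√(2 - c ^ 2) * x / 2) ^ 2) := by
  have h := (cosh_pos (√(2 - c ^ 2) * x / 2)).ne'
  rw [solitonEta, tanh_eq_sinh_div_cosh, div_pow, one_sub_div (pow_ne_zero 2 h),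
    cosh_sq_sub_sinh_sq]
  field_simp

theorem solitonEta_mul_solitonV (c x : ℝ) :
    solitonEta c x * solitonV c x =
      -c * solitonEta c x ^ 2 / (c ^ 2 + (2 - c ^ 2) * tanh (√(2 - c ^ 2) * x / 2) ^ 2) := by
  have h : 2 * (1 - solitonEta c x) = c ^ 2 + (2 - c ^ 2) * tanh (√(2 - c ^ 2) * x / 2) ^ 2 := by
    rw [solitonEta_eq_tanh]; ring
  rw [solitonV, h]
  ring

section Soliton

variable {c : ℝ}

theorem hasDerivAt_momentumPrimitive_tanh (hc0 : c ≠ 0) (hc : c ^ 2 < 2) (x : ℝ) :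
    HasDerivAt (fun x ↦ momentumPrimitive c (tanh (√(2 - c ^ 2) * x / 2)))
      (solitonEta c x * solitonV c x) x := by
  set k := √(2 - c ^ 2) with hk
  have hk2 : k ^ 2 = 2 - c ^ 2 := sq_sqrt (by linarith)
  have ht : HasDerivAt (fun x ↦ tanh (k * x / 2)) ((1 - tanh (k * x / 2) ^ 2) * (k / 2)) x :=
    (hasDerivAt_tanh_s5 _).comp x (((hasDerivAt_id x).const_mul k).div_const 2 |>.congr_deriv
      (by simp))
  have hG := ((ht.const_mul (c * k / 2)).sub ((ht.const_mul (k / c)).arctan))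
  refine hG.congr_deriv ?_
  rw [solitonEta_mul_solitonV, solitonEta_eq_tanh, ← hk, ← hk2]
  field_simp
  linear_combination k ^ 2 * (1 - tanh (k * x / 2) ^ 2) * hk2

theorem integral_solitonEta_mul_solitonV (hc0 : c ≠ 0) (hc : c ^ 2 < 2) :
    ∫ x, solitonEta c x * solitonV c x = 2 * momentumPrimitive c 1 := by
  have hk : 0 < √(2 - c ^ 2) := sqrt_pos.mpr (by linarith)
  have hcont : Continuous (momentumPrimitive c) := by unfold momentumPrimitive; fun_prop
  have hbot : Tendsto (fun x ↦ momentumPrimitive c (tanh (√(2 - c ^ 2) * x / 2))) atBot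
      (𝓝 (momentumPrimitive c (-1))) :=
    (hcont.tendsto _).comp <| tendsto_tanh_atBot_s5.comp <|
      (tendsto_id.const_mul_atBot hk).atBot_div_const two_pos
  have htop : Tendsto (fun x ↦ momentumPrimitive c (tanh (√(2 - c ^ 2) * x / 2))) atTop
      (𝓝 (momentumPrimitive c 1)) :=
    (hcont.tendsto _).comp <| tendsto_tanh_atTop_s5.comp <|
      (tendsto_id.const_mul_atTop hk).atTop_div_const two_pos
  have hderiv := hasDerivAt_momentumPrimitive_tanh hc0 hc
  -- `η_c v_c` has the sign of `-c`, so its integrability follows from the limits of its primitive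
  have hsign : ∀ x, 0 ≤ -c * (solitonEta c x * solitonV c x) := by
    intro x
    have h2c : 0 ≤ 2 - c ^ 2 := by linarith
    rw [solitonEta_mul_solitonV, ← mul_div_assoc]
    exact div_nonneg (by ring_nf; positivity) (by positivity)
  have hint : Integrable fun x ↦ solitonEta c x * solitonV c x :=
    (integrable_const_mul_iff (isUnit_iff_ne_zero.mpr (neg_ne_zero.mpr hc0)) _).mp <|
      integrable_of_hasDerivAt_of_nonneg_of_tendsto (fun x ↦ (hderiv x).const_mul (-c)) hsign
        (hbot.const_mul _) (htop.const_mul _)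
  rw [integral_of_hasDerivAt_of_tendsto hderiv hint hbot htop]
  simp only [momentumPrimitive, mul_neg, mul_one, arctan_neg]
  ring

theorem hasDerivAt_momentumPrimitive_one (hc0 : c ≠ 0) (hc : c ^ 2 < 2) :
    HasDerivAt (fun c ↦ momentumPrimitive c 1) (√(2 - c ^ 2)) c := by
  have h2c : 0 < 2 - c ^ 2 := by linarith
  set k := √(2 - c ^ 2) with hk
  have hk0 : 0 < k := sqrt_pos.mpr h2c
  have hk2 : k ^ 2 = 2 - c ^ 2 := sq_sqrt h2c.le
  have hsqrt : HasDerivAt (fun c ↦ √(2 - c ^ 2)) (-c / k) c := by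
    convert ((hasDerivAt_pow 2 c).const_sub 2).sqrt h2c.ne' using 1
    field_simp
    ring
  have h := (((hasDerivAt_id' c).mul hsqrt).div_const 2).sub
    (hsqrt.div (hasDerivAt_id' c) hc0).arctan
  simp only [momentumPrimitive, mul_one]
  refine h.congr_deriv ?_
  simp only [Pi.div_apply, ← hk]
  field_simp
  linear_combination -(k ^ 2 + c ^ 2) * hk2

end Soliton

/-- The map `c ↦ P(Q_c)` is differentiable at any `c₀` with `0 < |c₀| < √2`, with
derivative `√(2 - c₀²)`. -/
theorem deriv_momentum_of_soliton (c₀ : ℝ) (hc0 : c₀ ≠ 0) (hc : |c₀| < Real.sqrt 2)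
    (η v : ℝ → ℝ → ℝ)
    (hη : ∀ c x : ℝ, η c x =
      (2 - c ^ 2) / (2 * (Real.cosh (Real.sqrt (2 - c ^ 2) * x / 2)) ^ 2))
    (hv : ∀ c x : ℝ, v c x = -c * η c x / (2 * (1 - η c x))) :
    HasDerivAt (fun c : ℝ => (1 / 2) * ∫ x : ℝ, η c x * v c x)
      (Real.sqrt (2 - c₀ ^ 2)) c₀ := by
  obtain rfl : η = solitonEta := funext fun c ↦ funext (hη c)
  obtain rfl : v = solitonV := funext fun c ↦ funext (hv c)
  have hc2 : c₀ ^ 2 < 2 := by simpa using (lt_sqrt (abs_nonneg c₀)).mp hc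
  have hP : (fun c ↦ (1 / 2) * ∫ x, solitonEta c x * solitonV c x) =ᶠ[𝓝 c₀]
      fun c ↦ momentumPrimitive c 1 := by
    filter_upwards [eventually_ne_nhds hc0,
      (continuous_pow 2).continuousAt.eventually (eventually_lt_nhds hc2)] with c hc0 hc2
    rw [integral_solitonEta_mul_solitonV hc0 hc2]
    ring
  exact (hasDerivAt_momentumPrimitive_one hc0 hc2).congr_of_eventuallyEq hP
end

section
/- There exists a positive constant K such that for every real c with 0 < |c| < √2 and every x ∈ ℝ one has |η_c(x)| + |η_c′(x)| + |c|·|v_c(x)| ≤ K·(2−c²)·exp(−√(2−c²)·|x|). -/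
/-!
With `s = √(2 - c²)` the profile is `η_c = s² / (2 cosh² (s x / 2))`, and
`e^{|t|} ≤ 2 cosh t` gives `η_c(x) ≤ 2 s² e^{-s|x|}`. Differentiating,
`η_c' = -s tanh (s x / 2) η_c`, so `|η_c'| ≤ s η_c`. Finally `η_c ≤ s² / 2 = 1 - c² / 2`
keeps `1 - η_c ≥ c² / 2`, whence `|c| |v_c| = c² η_c / (2 (1 - η_c)) ≤ η_c`. The sum is
therefore at most `(2 + s) η_c ≤ 8 s² e^{-s|x|}`.
-/

open Real

lemma Real.exp_abs_le_two_mul_cosh (t : ℝ) : exp |t| ≤ 2 * cosh t := by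
  rw [cosh_eq]
  linarith [exp_abs_le t]

lemma Real.exp_abs_two_mul_le_four_mul_cosh_sq (t : ℝ) : exp |2 * t| ≤ 4 * cosh t ^ 2 := by
  have h := pow_le_pow_left₀ (exp_pos |t|).le (exp_abs_le_two_mul_cosh t) 2
  rw [abs_mul, abs_two, two_mul, exp_add]
  linarith

noncomputable def sechSqProfile (A s x : ℝ) : ℝ := A / (2 * cosh (s * x / 2) ^ 2)

section SechSqProfile

variable {A : ℝ} (s x : ℝ)

lemma sechSqProfile_nonneg (hA : 0 ≤ A) : 0 ≤ sechSqProfile A s x := by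
  unfold sechSqProfile
  positivity

lemma sechSqProfile_le_half (hA : 0 ≤ A) : sechSqProfile A s x ≤ A / 2 := by
  have h : 1 ≤ cosh (s * x / 2) ^ 2 := one_le_pow₀ (one_le_cosh _)
  exact div_le_div_of_nonneg_left hA two_pos (by linarith)

lemma sechSqProfile_le_exp (hA : 0 ≤ A) :
    sechSqProfile A s x ≤ 2 * A * exp (-|s * x|) := by
  have h : exp |s * x| ≤ 4 * cosh (s * x / 2) ^ 2 := by
    simpa [mul_div_cancel₀] using exp_abs_two_mul_le_four_mul_cosh_sq (s * x / 2)
  calc sechSqProfile A s x ≤ A / (exp |s * x| / 2) :=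
        div_le_div_of_nonneg_left hA (by positivity) (by linarith)
    _ = 2 * A * exp (-|s * x|) := by
        rw [exp_neg]
        field_simp

lemma hasDerivAt_sechSqProfile (A : ℝ) :
    HasDerivAt (sechSqProfile A s) (-s * tanh (s * x / 2) * sechSqProfile A s x) x := by
  have hlin : HasDerivAt (fun y => s * y / 2) (s / 2) x := by
    simpa using ((hasDerivAt_id x).const_mul s).div_const 2
  have hcosh : HasDerivAt (fun y => cosh (s * y / 2)) (sinh (s * x / 2) * (s / 2)) x :=
    (hasDerivAt_cosh _).comp x hlin
  have hC : cosh (s * x / 2) ≠ 0 := (cosh_pos _).ne'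
  refine ((hasDerivAt_const x A).div ((hcosh.fun_pow 2).const_mul 2)
    (by positivity)).congr_deriv ?_
  rw [sechSqProfile, tanh_eq_sinh_div_cosh]
  field_simp
  ring

lemma abs_deriv_sechSqProfile_le (hA : 0 ≤ A) :
    |deriv (sechSqProfile A s) x| ≤ |s| * sechSqProfile A s x := by
  rw [(hasDerivAt_sechSqProfile s x A).deriv, abs_mul, abs_mul, abs_neg,
    abs_of_nonneg (sechSqProfile_nonneg s x hA)]
  refine mul_le_mul_of_nonneg_right ?_ (sechSqProfile_nonneg s x hA)
  exact mul_le_of_le_one_right (abs_nonneg s) (abs_tanh_lt_one _).le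

end SechSqProfile

noncomputable def solitonVelocity (c η : ℝ) : ℝ := -c * η / (2 * (1 - η))

lemma abs_mul_abs_solitonVelocity_le {c η : ℝ} (hη₀ : 0 ≤ η) (hη : η ≤ 1 - c ^ 2 / 2) :
    |c| * |solitonVelocity c η| ≤ η := by
  unfold solitonVelocity
  have hden : 0 ≤ 2 * (1 - η) := by nlinarith [sq_nonneg c]
  rw [abs_div, abs_mul, abs_neg, abs_of_nonneg hη₀, abs_of_nonneg hden, ← mul_div_assoc,
    ← mul_assoc, abs_mul_abs_self, ← sq]
  exact div_le_of_le_mul₀ hden hη₀ (by nlinarith)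

/-- Uniform exponential decay of the solitons:
`|η_c(x)| + |η_c'(x)| + |c| |v_c(x)| ≤ K (2-c²) exp(-√(2-c²) |x|)`. -/
theorem soliton_exponential_decay
    (η v : ℝ → ℝ → ℝ)
    (hη : ∀ c x : ℝ, η c x =
      (2 - c ^ 2) / (2 * (Real.cosh (Real.sqrt (2 - c ^ 2) * x / 2)) ^ 2))
    (hv : ∀ c x : ℝ, v c x = -c * η c x / (2 * (1 - η c x))) :
    ∃ K : ℝ, 0 < K ∧ ∀ c : ℝ, c ≠ 0 → |c| < Real.sqrt 2 → ∀ x : ℝ,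
      |η c x| + |deriv (η c) x| + |c| * |v c x|
        ≤ K * (2 - c ^ 2) * Real.exp (-(Real.sqrt (2 - c ^ 2)) * |x|) := by
  refine ⟨8, by norm_num, fun c _ hc x => ?_⟩
  have hA : 0 < 2 - c ^ 2 := by
    have := (lt_sqrt (abs_nonneg c)).1 hc
    rw [sq_abs] at this
    linarith
  set s := √(2 - c ^ 2)
  have hs₀ : 0 ≤ s := sqrt_nonneg _
  have hs₂ : s ≤ 2 := sqrt_le_iff.2 ⟨by norm_num, by nlinarith [sq_nonneg c]⟩
  have hηc : η c = sechSqProfile (2 - c ^ 2) s := funext (hη c)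
  have hη₀ : 0 ≤ η c x := hηc ▸ sechSqProfile_nonneg s x hA.le
  have hη_half : η c x ≤ 1 - c ^ 2 / 2 := by
    linarith [hηc ▸ sechSqProfile_le_half s x hA.le]
  calc |η c x| + |deriv (η c) x| + |c| * |v c x|
      ≤ η c x + s * η c x + η c x := by
        rw [abs_of_nonneg hη₀, hv, ← abs_of_nonneg hs₀]
        gcongr
        · exact hηc ▸ abs_deriv_sechSqProfile_le s x hA.le
        · exact abs_mul_abs_solitonVelocity_le hη₀ hη_half
    _ ≤ 4 * η c x := by nlinarith [mul_nonneg (sub_nonneg.2 hs₂) hη₀]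
    _ ≤ 4 * (2 * (2 - c ^ 2) * exp (-|s * x|)) := by
        gcongr
        exact hηc ▸ sechSqProfile_le_exp s x hA.le
    _ = 8 * (2 - c ^ 2) * exp (-s * |x|) := by
        rw [abs_mul, abs_of_nonneg hs₀, neg_mul]
        ring
end

section
/- Let a < b be real numbers, let ν_a and ν_b be positive real numbers, set ν := min{ν_a, ν_b}, and let p be a real number with 1 ≤ p < ∞. Then (∫_ℝ exp(−p·ν_a·(x−a)⁺)·exp(−p·ν_b·(x−b)⁻) dx)^(1/p) ≤ (2/(p·ν) + (b−a))^(1/p) · exp(−ν·(b−a)), where y⁺ := max{y,0} and y⁻ := max{−y,0} for a real number y. -/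
/-!
Since `(x - a)⁺ + (b - x)⁺ = (b - a) + dist(x, [a, b])` and `ν ≤ ν_a, ν_b`, the integrand is at
most `exp(-pν(b - a)) · exp(-pν · dist(x, [a, b]))`. The second factor integrates to
`1/(pν) + (b - a) + 1/(pν)`: two exponential tails and the plateau on `[a, b]`.
-/

open MeasureTheory

open Set Real

/-- For `a ≤ b` this is `Metric.infDist x (Icc a b)`. -/
def distIcc (a b x : ℝ) : ℝ := max (x - b) 0 + max (a - x) 0

section distIcc

variable {a b x : ℝ}

lemma distIcc_of_le_left (hab : a ≤ b) (hx : x ≤ a) : distIcc a b x = a - x := by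
  simp [distIcc, (by linarith : x - b ≤ 0), hx]

lemma distIcc_of_mem (hx : x ∈ Icc a b) : distIcc a b x = 0 := by
  simp [distIcc, hx.1, hx.2]

lemma distIcc_of_right_le (hab : a ≤ b) (hx : b ≤ x) : distIcc a b x = x - b := by
  simp [distIcc, (by linarith : a - x ≤ 0), hx]

lemma posPart_sub_add_negPart_sub (hab : a ≤ b) (x : ℝ) :
    max (x - a) 0 + max (-(x - b)) 0 = (b - a) + distIcc a b x := by
  rcases le_total x a with hxa | hxa
  · rw [distIcc_of_le_left hab hxa, max_eq_right (by linarith), max_eq_left (by linarith)]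
    ring
  rcases le_total x b with hxb | hxb
  · rw [distIcc_of_mem ⟨hxa, hxb⟩, max_eq_left (by linarith), max_eq_left (by linarith)]
    ring
  · rw [distIcc_of_right_le hab hxb, max_eq_left (by linarith), max_eq_right (by linarith)]
    ring

lemma continuous_distIcc : Continuous (distIcc a b) := by
  unfold distIcc; fun_prop

end distIcc

lemma exp_neg_mul_sub_left (c b x : ℝ) : exp (-c * (x - b)) = exp (-c * x) * exp (c * b) := by
  rw [← exp_add]; ring_nf

lemma exp_neg_mul_sub_right (c a x : ℝ) : exp (-c * (a - x)) = exp (c * x) * exp (-c * a) := by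
  rw [← exp_add]; ring_nf

section ExpDecay

variable {c : ℝ}

lemma integrableOn_exp_neg_mul_sub_Ioi (hc : 0 < c) (b : ℝ) :
    IntegrableOn (fun x ↦ exp (-c * (x - b))) (Ioi b) := by
  simp_rw [exp_neg_mul_sub_left]
  exact (integrableOn_exp_mul_Ioi (neg_lt_zero.2 hc) b).mul_const _

lemma integral_exp_neg_mul_sub_Ioi (hc : 0 < c) (b : ℝ) :
    ∫ x in Ioi b, exp (-c * (x - b)) = 1 / c := by
  simp_rw [exp_neg_mul_sub_left, integral_mul_const, integral_exp_mul_Ioi (neg_lt_zero.2 hc),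
    neg_div_neg_eq, div_mul_eq_mul_div, ← exp_add]
  simp

lemma integrableOn_exp_neg_mul_sub_Iic (hc : 0 < c) (a : ℝ) :
    IntegrableOn (fun x ↦ exp (-c * (a - x))) (Iic a) := by
  simp_rw [exp_neg_mul_sub_right]
  exact (integrableOn_exp_mul_Iic hc a).mul_const _

lemma integral_exp_neg_mul_sub_Iic (hc : 0 < c) (a : ℝ) :
    ∫ x in Iic a, exp (-c * (a - x)) = 1 / c := by
  simp_rw [exp_neg_mul_sub_right, integral_mul_const, integral_exp_mul_Iic hc,
    div_mul_eq_mul_div, ← exp_add]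
  simp

end ExpDecay

lemma integrable_exp_neg_mul_distIcc {a b c : ℝ} (hab : a ≤ b) (hc : 0 < c) :
    Integrable (fun x ↦ exp (-c * distIcc a b x)) := by
  have hcont : Continuous (fun x ↦ exp (-c * distIcc a b x)) :=
    (continuous_const.mul continuous_distIcc).rexp
  rw [← integrableOn_univ, ← Iic_union_Ioi (a := b), ← Iic_union_Icc_eq_Iic hab]
  refine ((?_ : IntegrableOn _ (Iic a)).union hcont.integrableOn_Icc).union ?_
  · refine (integrableOn_exp_neg_mul_sub_Iic hc a).congr_fun (fun x hx ↦ ?_) measurableSet_Iic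
    rw [distIcc_of_le_left hab hx]
  · refine (integrableOn_exp_neg_mul_sub_Ioi hc b).congr_fun (fun x hx ↦ ?_) measurableSet_Ioi
    rw [distIcc_of_right_le hab (le_of_lt hx)]

lemma integral_exp_neg_mul_distIcc {a b c : ℝ} (hab : a ≤ b) (hc : 0 < c) :
    ∫ x, exp (-c * distIcc a b x) = 2 / c + (b - a) := by
  have hg := integrable_exp_neg_mul_distIcc hab hc
  have left : ∫ x in Iic a, exp (-c * distIcc a b x) = 1 / c := by
    rw [← integral_exp_neg_mul_sub_Iic hc a]
    refine setIntegral_congr_fun measurableSet_Iic fun x hx ↦ ?_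
    rw [distIcc_of_le_left hab hx]
  have middle : ∫ x in a..b, exp (-c * distIcc a b x) = b - a := by
    rw [intervalIntegral.integral_congr (g := fun _ ↦ 1) fun x hx ↦ ?_]
    · simp
    rw [uIcc_of_le hab] at hx
    simp [distIcc_of_mem hx]
  have right : ∫ x in Ioi b, exp (-c * distIcc a b x) = 1 / c := by
    rw [← integral_exp_neg_mul_sub_Ioi hc b]
    refine setIntegral_congr_fun measurableSet_Ioi fun x hx ↦ ?_
    rw [distIcc_of_right_le hab (le_of_lt hx)]
  rw [← intervalIntegral.integral_Iic_add_Ioi (b := a) hg.integrableOn hg.integrableOn,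
    ← intervalIntegral.integral_interval_add_Ioi (b := b) hg.integrableOn hg.integrableOn,
    left, middle, right]
  ring

lemma exp_mul_exp_le_exp_mul_exp_distIcc {a b νa νb ν p : ℝ} (hab : a ≤ b) (hp : 0 ≤ p)
    (hνa : ν ≤ νa) (hνb : ν ≤ νb) (x : ℝ) :
    exp (-p * νa * max (x - a) 0) * exp (-p * νb * max (-(x - b)) 0)
      ≤ exp (-(p * ν) * (b - a)) * exp (-(p * ν) * distIcc a b x) := by
  have key : ν * (max (x - a) 0 + max (-(x - b)) 0)
      ≤ νa * max (x - a) 0 + νb * max (-(x - b)) 0 := by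
    rw [mul_add]
    exact add_le_add (mul_le_mul_of_nonneg_right hνa (le_max_right _ _))
      (mul_le_mul_of_nonneg_right hνb (le_max_right _ _))
  rw [posPart_sub_add_negPart_sub hab] at key
  rw [← exp_add, ← exp_add, exp_le_exp]
  nlinarith [mul_le_mul_of_nonneg_left key hp]

/-- Elementary interaction estimate: the `L^p` norm of
`exp(-ν_a (x-a)⁺) exp(-ν_b (x-b)⁻)` is at most
`(2/(p ν) + (b-a))^(1/p) exp(-ν (b-a))` where `ν = min{ν_a, ν_b}`. -/
theorem interaction_lp_estimate (a b νa νb p : ℝ) (hab : a < b)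
    (hνa : 0 < νa) (hνb : 0 < νb) (hp : 1 ≤ p) :
    (∫ x : ℝ, Real.exp (-p * νa * max (x - a) 0) * Real.exp (-p * νb * max (-(x - b)) 0))
        ^ ((1 : ℝ) / p)
      ≤ (2 / (p * min νa νb) + (b - a)) ^ ((1 : ℝ) / p)
          * Real.exp (-(min νa νb) * (b - a)) := by
  set ν := min νa νb
  have hp0 : 0 < p := by linarith
  have hc : 0 < p * ν := mul_pos hp0 (lt_min hνa hνb)
  have hint : ∫ x, exp (-p * νa * max (x - a) 0) * exp (-p * νb * max (-(x - b)) 0)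
      ≤ exp (-(p * ν) * (b - a)) * (2 / (p * ν) + (b - a)) := by
    rw [← integral_exp_neg_mul_distIcc hab.le hc, ← integral_const_mul]
    exact integral_mono_of_nonneg (.of_forall fun x ↦ by positivity)
      ((integrable_exp_neg_mul_distIcc hab.le hc).const_mul _)
      (.of_forall (exp_mul_exp_le_exp_mul_exp_distIcc hab.le hp0.le (min_le_left _ _)
        (min_le_right _ _)))
  have hroot : exp (-(p * ν) * (b - a)) ^ (1 / p) = exp (-ν * (b - a)) := by
    rw [← exp_mul]
    field_simp
  calc _ ≤ (exp (-(p * ν) * (b - a)) * (2 / (p * ν) + (b - a))) ^ (1 / p) :=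
        rpow_le_rpow (integral_nonneg fun x ↦ by positivity) hint (by positivity)
    _ = _ := by
        rw [mul_rpow (exp_pos _).le (by positivity), hroot, mul_comm]
end

section
/- Let τ > 0, L > 0 and a ∈ ℝ, and define Φ(x) = (1/2)·(tanh(τ·(x − a + L/4)) − tanh(τ·(x − a − L/4))). Then for every x ∈ ℝ one has 0 < Φ(x) ≤ exp(−2·τ·max{|x − a| − L/4, 0}). -/
/-!
Writing `y = |x - a|` (the cut-off is even about `a`) and `c = L / 4`, we have
`2Φ(x) = tanh (τ (y + c)) - tanh (τ (y - c))`. This is positive since `tanh` is strictly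
increasing, less than `2` since `tanh` takes values in `(-1, 1)`, and at most
`1 - tanh (τ (y - c)) ≤ 2 exp (-2τ (y - c))`.
-/

open Real

namespace Real

theorem tanh_strictMono : StrictMono tanh := fun x y hxy ↦
  (artanh_lt_artanh_iff ⟨neg_one_lt_tanh x, tanh_lt_one x⟩ ⟨neg_one_lt_tanh y, tanh_lt_one y⟩).1
    (by simpa only [artanh_tanh] using hxy)

theorem one_sub_tanh_le (u : ℝ) : 1 - tanh u ≤ 2 * exp (-2 * u) := by
  have hsum : 0 < exp u + exp (-u) := by positivity
  calc 1 - tanh u = 2 * exp (-u) / (exp u + exp (-u)) := by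
        rw [tanh_eq]; field_simp; ring
    _ ≤ 2 * exp (-u) / exp u :=
        div_le_div_of_nonneg_left (by positivity) (exp_pos u) (by linarith [exp_pos (-u)])
    _ = 2 * exp (-2 * u) := by rw [mul_div_assoc, ← exp_sub]; ring_nf

theorem tanh_sub_tanh_le (u v : ℝ) : tanh u - tanh v ≤ 2 * exp (-2 * max v 0) := by
  rcases le_total v 0 with hv | hv
  · rw [max_eq_right hv, mul_zero, exp_zero]
    linarith [tanh_lt_one u, neg_one_lt_tanh v]
  · rw [max_eq_left hv]
    linarith [tanh_lt_one u, one_sub_tanh_le v]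

end Real

theorem tanh_sub_tanh_eq_abs (τ c y : ℝ) :
    tanh (τ * (y + c)) - tanh (τ * (y - c)) = tanh (τ * (|y| + c)) - tanh (τ * (|y| - c)) := by
  rcases abs_cases y with ⟨hy, -⟩ | ⟨hy, -⟩
  · rw [hy]
  · rw [hy, show τ * (-y + c) = -(τ * (y - c)) by ring, show τ * (-y - c) = -(τ * (y + c)) by ring,
      tanh_neg, tanh_neg]
    ring

/-- Pointwise bounds for the cut-off function
`Φ(x) = (1/2)(tanh(τ(x - a + L/4)) - tanh(τ(x - a - L/4)))`:
it is positive and bounded by `exp(-2τ max{|x-a| - L/4, 0})`. -/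
theorem cutoff_pointwise_bounds (τ L a : ℝ) (hτ : 0 < τ) (hL : 0 < L)
    (Φ : ℝ → ℝ)
    (hΦ : ∀ x : ℝ, Φ x =
      (1 / 2) * (Real.tanh (τ * (x - a + L / 4)) - Real.tanh (τ * (x - a - L / 4)))) :
    ∀ x : ℝ, 0 < Φ x ∧ Φ x ≤ Real.exp (-2 * τ * max (|x - a| - L / 4) 0) := by
  intro x
  rw [hΦ x, tanh_sub_tanh_eq_abs]
  constructor
  · have : τ * (|x - a| - L / 4) < τ * (|x - a| + L / 4) := by gcongr; linarith
    linarith [tanh_strictMono this]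
  · have hbound := tanh_sub_tanh_le (τ * (|x - a| + L / 4)) (τ * (|x - a| - L / 4))
    rw [mul_assoc, mul_max_of_nonneg _ _ hτ.le, mul_zero]
    linarith
end

section
/- Let c be a real number with 0 < |c| < √2. Then the function η_c′ lies in the kernel of the Sturm–Liouville operator 𝓛_c: that is, for every x ∈ ℝ, −(d/dx)(η_c″(x)/(4·(1−η_c(x)))) + ((2 − c² − 6·η_c(x) + 3·η_c(x)²)/(4·(1−η_c(x))²))·η_c′(x) = 0. -/
/-!
Write `A = 2 - c²`, so that `η = A / (2 cosh² (√A x / 2))`. This sech² profile solves the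
travelling-wave equation `η'' = A η - 3 η²`. Hence `η'' / (4 (1 - η)) = g ∘ η` with
`g t = (A t - 3 t²) / (4 (1 - t))`, and `g' t = (A - 6 t + 3 t²) / (4 (1 - t)²)` is exactly the
potential of `𝓛_c`; the kernel identity is the chain rule `(g ∘ η)' = g' (η) η'`.
-/

open Real

noncomputable def soliton (A k x : ℝ) : ℝ := A / (2 * cosh (k * x / 2) ^ 2)

noncomputable def sturmLiouville (A : ℝ) (η u : ℝ → ℝ) (x : ℝ) : ℝ :=
  -deriv (fun y => deriv u y / (4 * (1 - η y))) x
    + ((A - 6 * η x + 3 * η x ^ 2) / (4 * (1 - η x) ^ 2)) * u x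

namespace soliton

theorem hasDerivAt (A k x : ℝ) :
    HasDerivAt (soliton A k)
      (-(A * k * sinh (k * x / 2)) / (2 * cosh (k * x / 2) ^ 3)) x := by
  have hu : HasDerivAt (fun y => k * y / 2) (k / 2) x := by
    simpa using ((hasDerivAt_id x).const_mul k).div_const 2
  have hcosh := (hu.cosh.fun_pow 2).const_mul 2
  refine ((hasDerivAt_const x A).fun_div hcosh (by positivity)).congr_deriv ?_
  field_simp
  ring

theorem hasDerivAt_deriv (A k x : ℝ) :
    HasDerivAt (deriv (soliton A k))
      (A * k ^ 2 * (2 * cosh (k * x / 2) ^ 2 - 3) / (4 * cosh (k * x / 2) ^ 4)) x := by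
  have hu : HasDerivAt (fun y => k * y / 2) (k / 2) x := by
    simpa using ((hasDerivAt_id x).const_mul k).div_const 2
  rw [show deriv (soliton A k) = _ from funext fun y => (hasDerivAt A k y).deriv]
  refine (((hu.sinh.const_mul (A * k)).fun_neg).fun_div ((hu.cosh.fun_pow 3).const_mul 2)
    (by positivity)).congr_deriv ?_
  field_simp
  rw [sinh_sq]
  ring

theorem deriv_deriv {A k : ℝ} (hk : k ^ 2 = A) :
    deriv (deriv (soliton A k)) = fun x => A * soliton A k x - 3 * soliton A k x ^ 2 := by
  funext x
  rw [(hasDerivAt_deriv A k x).deriv, soliton, ← hk]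
  field_simp
  ring

theorem lt_one {A : ℝ} (hA : A < 2) (k x : ℝ) : soliton A k x < 1 := by
  rw [soliton, div_lt_one (by positivity)]
  nlinarith [one_le_cosh (k * x / 2)]

end soliton

theorem hasDerivAt_mul_sub_three_sq_div_four_one_sub (A t : ℝ) (ht : t ≠ 1) :
    HasDerivAt (fun s => (A * s - 3 * s ^ 2) / (4 * (1 - s)))
      ((A - 6 * t + 3 * t ^ 2) / (4 * (1 - t) ^ 2)) t := by
  have h1 : 1 - t ≠ 0 := sub_ne_zero.2 ht.symm
  have hnum : HasDerivAt (fun s => A * s - 3 * s ^ 2) (A - 6 * t) t :=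
    (((hasDerivAt_id' t).const_mul A).fun_sub ((hasDerivAt_pow 2 t).const_mul 3)).congr_deriv
      (by ring)
  have hden : HasDerivAt (fun s => 4 * (1 - s)) (-4) t :=
    (((hasDerivAt_id' t).const_sub 1).const_mul 4).congr_deriv (by ring)
  refine (hnum.fun_div hden (by simpa)).congr_deriv ?_
  field_simp
  ring

theorem sturmLiouville_deriv_eq_zero {η : ℝ → ℝ} {A x : ℝ}
    (hη'' : deriv (deriv η) = fun y => A * η y - 3 * η y ^ 2)
    (hη : DifferentiableAt ℝ η x) (hx : η x ≠ 1) :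
    sturmLiouville A η (deriv η) x = 0 := by
  have hQ : HasDerivAt (fun y => (A * η y - 3 * η y ^ 2) / (4 * (1 - η y)))
      ((A - 6 * η x + 3 * η x ^ 2) / (4 * (1 - η x) ^ 2) * deriv η x) x :=
    (hasDerivAt_mul_sub_three_sq_div_four_one_sub A (η x) hx).comp x hη.hasDerivAt
  rw [sturmLiouville, hη'', hQ.deriv]
  ring

/-- The derivative `η_c'` lies in the kernel of the Sturm-Liouville operator `𝓛_c`. -/
theorem deriv_eta_in_kernel (c : ℝ) (hc0 : c ≠ 0) (hc : |c| < Real.sqrt 2)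
    (η : ℝ → ℝ)
    (hη : ∀ x : ℝ, η x =
      (2 - c ^ 2) / (2 * (Real.cosh (Real.sqrt (2 - c ^ 2) * x / 2)) ^ 2)) :
    ∀ x : ℝ,
      -deriv (fun y : ℝ => deriv (deriv η) y / (4 * (1 - η y))) x
        + ((2 - c ^ 2 - 6 * η x + 3 * (η x) ^ 2) / (4 * (1 - η x) ^ 2)) * deriv η x = 0 := by
  intro x
  have hc2 : c ^ 2 < 2 := by simpa [sq_abs] using (lt_sqrt (abs_nonneg c)).1 hc
  have hA : 2 - c ^ 2 < 2 := by
    have : 0 < c ^ 2 := by positivity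
    linarith
  have hk : √(2 - c ^ 2) ^ 2 = 2 - c ^ 2 := sq_sqrt (by linarith)
  obtain rfl : η = soliton (2 - c ^ 2) √(2 - c ^ 2) := funext hη
  exact sturmLiouville_deriv_eq_zero (soliton.deriv_deriv hk)
    (soliton.hasDerivAt _ _ x).differentiableAt (soliton.lt_one hA _ x).ne
end

section
/- Let η, v : ℝ × ℝ → ℝ be smooth functions (of the time variable t and space variable x) with η(t,x) < 1 for all (t,x), satisfying the hydrodynamical Gross–Pitaevskii system: ∂_t η = ∂_x(2v − 2ηv) and ∂_t v = ∂_x(η − v² − ∂_x(∂_xη/(2(1−η))) + (∂_xη)²/(4(1−η)²)). Then for all (t,x), ∂_t(η·v) = ∂_x((1−2η)·v² + η²/2 + (3−2η)·(∂_xη)²/(4·(1−η)²)) + (1/2)·∂_x³(η + ln(1−η)). -/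
lemma key_spatial (f g : ℝ → ℝ) (hf : ContDiff ℝ (⊤ : ℕ∞) f) (hg : ContDiff ℝ (⊤ : ℕ∞) g)
    (hlt : ∀ y : ℝ, f y < 1) (x : ℝ) :
    deriv (fun y => 2 * g y - 2 * f y * g y) x * g x
      + f x * deriv (fun y => f y - g y ^ 2
          - deriv (fun z => deriv f z / (2 * (1 - f z))) y
          + (deriv f y) ^ 2 / (4 * (1 - f y) ^ 2)) x
    = deriv (fun y => (1 - 2 * f y) * g y ^ 2 + f y ^ 2 / 2
          + (3 - 2 * f y) * (deriv f y) ^ 2 / (4 * (1 - f y) ^ 2)) x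
      + (1 / 2) * deriv (deriv (deriv (fun y => f y + Real.log (1 - f y)))) x := by
  have hf' : ContDiff ℝ (⊤ : ℕ∞) f := hf.of_le (by simp)
  have hg' : ContDiff ℝ (⊤ : ℕ∞) g := hg.of_le (by simp)
  have hfd : Differentiable ℝ f := (contDiff_infty_iff_deriv.mp hf').1
  have hf1c : ContDiff ℝ (⊤ : ℕ∞) (deriv f) := (contDiff_infty_iff_deriv.mp hf').2
  have hf1d : Differentiable ℝ (deriv f) := (contDiff_infty_iff_deriv.mp hf1c).1
  have hf2c : ContDiff ℝ (⊤ : ℕ∞) (deriv (deriv f)) := (contDiff_infty_iff_deriv.mp hf1c).2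
  have hf2d : Differentiable ℝ (deriv (deriv f)) := (contDiff_infty_iff_deriv.mp hf2c).1
  have hgd : Differentiable ℝ g := (contDiff_infty_iff_deriv.mp hg').1
  have hU : ∀ y : ℝ, (1 : ℝ) - f y ≠ 0 := fun y => ne_of_gt (by linarith [hlt y])
  have Hf : ∀ y : ℝ, HasDerivAt f (deriv f y) y := fun y => (hfd y).hasDerivAt
  have Hf1 : ∀ y : ℝ, HasDerivAt (deriv f) (deriv (deriv f) y) y := fun y => (hf1d y).hasDerivAt
  have Hf2 : ∀ y : ℝ, HasDerivAt (deriv (deriv f)) (deriv (deriv (deriv f)) y) y :=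
    fun y => (hf2d y).hasDerivAt
  have Hg : ∀ y : ℝ, HasDerivAt g (deriv g y) y := fun y => (hgd y).hasDerivAt
  -- Step A : derivative of f'/(2(1-f))
  have hA : deriv (fun z => deriv f z / (2 * (1 - f z)))
      = fun z => deriv (deriv f) z / (2 * (1 - f z))
          + (deriv f z) ^ 2 / (2 * (1 - f z) ^ 2) := by
    funext z
    have h := (Hf1 z).div (((Hf z).const_sub 1).const_mul 2)
      (mul_ne_zero two_ne_zero (hU z))
    erw [h.deriv]
    field_simp [hU z]
    ring
  -- Step L1 : first derivative of f + log(1-f)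
  have hL1 : deriv (fun y => f y + Real.log (1 - f y))
      = fun y => deriv f y + -(deriv f y) / (1 - f y) := by
    funext y
    have h := (Hf y).add (((Hf y).const_sub 1).log (hU y))
    exact h.deriv
  -- Step L2 : second derivative
  have hL2 : deriv (deriv (fun y => f y + Real.log (1 - f y)))
      = fun y => deriv (deriv f) y
          + (-(deriv (deriv f) y) * (1 - f y) - -(deriv f y) * -(deriv f y)) / (1 - f y) ^ 2 := by
    rw [hL1]
    funext y
    have h := (Hf1 y).add (((Hf1 y).neg).div ((Hf y).const_sub 1) (hU y))
    exact h.deriv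
  -- Step L3 : third derivative at x
  have hL3 : deriv (deriv (deriv (fun y => f y + Real.log (1 - f y)))) x
      = deriv (deriv (deriv f)) x
          + (((-(deriv (deriv (deriv f)) x) * (1 - f x)
                + -(deriv (deriv f) x) * -(deriv f x))
              - (-(deriv (deriv f) x) * -(deriv f x) + -(deriv f x) * -(deriv (deriv f) x)))
                * (1 - f x) ^ 2
            - (-(deriv (deriv f) x) * (1 - f x) - -(deriv f x) * -(deriv f x))
                * (2 * (1 - f x) ^ 1 * -(deriv f x))) / ((1 - f x) ^ 2) ^ 2 := by
    rw [hL2]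
    have h := (Hf2 x).add
      (((((Hf2 x).neg).mul ((Hf x).const_sub 1)).sub
          (((Hf1 x).neg).mul ((Hf1 x).neg))).div
        (((Hf x).const_sub 1).pow 2) (pow_ne_zero 2 (hU x)))
    erw [h.deriv]
    norm_num
  -- LHS first spatial derivative
  have h1 : deriv (fun y => 2 * g y - 2 * f y * g y) x
      = 2 * deriv g x - ((2 * deriv f x) * g x + (2 * f x) * deriv g x) := by
    have h := ((Hg x).const_mul 2).sub (((Hf x).const_mul 2).mul (Hg x))
    exact h.deriv
  -- LHS second spatial derivative
  have h2 : deriv (fun y => f y - g y ^ 2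
        - deriv (fun z => deriv f z / (2 * (1 - f z))) y
        + (deriv f y) ^ 2 / (4 * (1 - f y) ^ 2)) x
      = deriv f x - (2 * g x ^ 1 * deriv g x)
        - ((deriv (deriv (deriv f)) x * (2 * (1 - f x))
              - deriv (deriv f) x * (2 * -(deriv f x))) / (2 * (1 - f x)) ^ 2
           + ((2 * deriv f x ^ 1 * deriv (deriv f) x) * (2 * (1 - f x) ^ 2)
              - deriv f x ^ 2 * (2 * (2 * (1 - f x) ^ 1 * -(deriv f x))))
                / (2 * (1 - f x) ^ 2) ^ 2)
        + ((2 * deriv f x ^ 1 * deriv (deriv f) x) * (4 * (1 - f x) ^ 2)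
            - deriv f x ^ 2 * (4 * (2 * (1 - f x) ^ 1 * -(deriv f x))))
              / (4 * (1 - f x) ^ 2) ^ 2 := by
    simp only [hA]
    have h := (((Hf x).sub ((Hg x).pow 2)).sub
        (((Hf2 x).div (((Hf x).const_sub 1).const_mul 2)
            (mul_ne_zero two_ne_zero (hU x))).add
          (((Hf1 x).pow 2).div ((((Hf x).const_sub 1).pow 2).const_mul 2)
            (mul_ne_zero two_ne_zero (pow_ne_zero 2 (hU x)))))).add
      (((Hf1 x).pow 2).div ((((Hf x).const_sub 1).pow 2).const_mul 4)
        (mul_ne_zero four_ne_zero (pow_ne_zero 2 (hU x))))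
    erw [h.deriv]
    norm_num
  -- RHS main spatial derivative
  have h3 : deriv (fun y => (1 - 2 * f y) * g y ^ 2 + f y ^ 2 / 2
        + (3 - 2 * f y) * (deriv f y) ^ 2 / (4 * (1 - f y) ^ 2)) x
      = (-(2 * deriv f x) * g x ^ 2 + (1 - 2 * f x) * (2 * g x ^ 1 * deriv g x))
        + (2 * f x ^ 1 * deriv f x) / 2
        + ((-(2 * deriv f x) * deriv f x ^ 2
              + (3 - 2 * f x) * (2 * deriv f x ^ 1 * deriv (deriv f) x)) * (4 * (1 - f x) ^ 2)
            - (3 - 2 * f x) * deriv f x ^ 2 * (4 * (2 * (1 - f x) ^ 1 * -(deriv f x))))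
              / (4 * (1 - f x) ^ 2) ^ 2 := by
    have h := (((((Hf x).const_mul 2).const_sub 1).mul ((Hg x).pow 2)).add
        (((Hf x).pow 2).div_const 2)).add
      (((((Hf x).const_mul 2).const_sub 3).mul ((Hf1 x).pow 2)).div
        ((((Hf x).const_sub 1).pow 2).const_mul 4)
        (mul_ne_zero four_ne_zero (pow_ne_zero 2 (hU x))))
    erw [h.deriv]
    norm_num
  rw [h1, h2, h3, hL3]
  have hu := hU x
  field_simp
  ring


/-- Conservation law for the momentum density: if `(η, v)` is a smooth solution of
the hydrodynamical Gross-Pitaevskii system with `η < 1`, then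
`∂_t(ηv) = ∂_x((1-2η)v² + η²/2 + (3-2η)(∂_xη)²/(4(1-η)²)) + (1/2)∂_x³(η + ln(1-η))`. -/
theorem momentum_density_conservation_law (η v : ℝ → ℝ → ℝ)
    (hη : ContDiff ℝ (⊤ : ℕ∞) (Function.uncurry η))
    (hv : ContDiff ℝ (⊤ : ℕ∞) (Function.uncurry v))
    (hlt : ∀ t x : ℝ, η t x < 1)
    (heq1 : ∀ t x : ℝ,
      deriv (fun s => η s x) t = deriv (fun y => 2 * v t y - 2 * η t y * v t y) x)
    (heq2 : ∀ t x : ℝ,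
      deriv (fun s => v s x) t =
        deriv (fun y => η t y - (v t y) ^ 2
          - deriv (fun z => deriv (η t) z / (2 * (1 - η t z))) y
          + (deriv (η t) y) ^ 2 / (4 * (1 - η t y) ^ 2)) x) :
    ∀ t x : ℝ,
      deriv (fun s => η s x * v s x) t =
        deriv (fun y => (1 - 2 * η t y) * (v t y) ^ 2 + (η t y) ^ 2 / 2
          + (3 - 2 * η t y) * (deriv (η t) y) ^ 2 / (4 * (1 - η t y) ^ 2)) x
        + (1 / 2) * deriv (deriv (deriv (fun y => η t y + Real.log (1 - η t y)))) x := by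

  intro t x
  have hηt : Differentiable ℝ (fun s => η s x) :=
    (hη.differentiable (by simp)).comp (differentiable_id.prodMk (differentiable_const x))
  have hvt : Differentiable ℝ (fun s => v s x) :=
    (hv.differentiable (by simp)).comp (differentiable_id.prodMk (differentiable_const x))
  have hprod : deriv (fun s => η s x * v s x) t
      = deriv (fun s => η s x) t * v t x + η t x * deriv (fun s => v s x) t :=
    deriv_mul (hηt t) (hvt t)
  rw [hprod, heq1 t x, heq2 t x]
  have hηx : ContDiff ℝ (⊤ : ℕ∞) (η t) := hη.comp (contDiff_const.prodMk contDiff_id)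
  have hvx : ContDiff ℝ (⊤ : ℕ∞) (v t) := hv.comp (contDiff_const.prodMk contDiff_id)
  exact key_spatial (η t) (v t) hηx hvx (fun y => hlt t y) x
end
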